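/- Let X be a real normed vector space, W a finite-dimensional linear subspace of X, and (V_j)_{j ∈ ℕ} a sequence of finite-dimensional linear subspaces of X. Assume that for every strictly increasing function φ : ℕ → ℕ and every sequence (u_k) with u_k ∈ V_{φ(k)} and ‖u_k‖ = 1 for all k, there exist a strictly increasing ψ : ℕ → ℕ and an element w ∈ W such that u_{ψ(k)} → w in X. Then there exists J ∈ ℕ such that dim V_j ≤ dim W for all j ≥ J. -/

import Mathlib

open Filter

/-!
Choose a continuous linear projection `P` of `X` onto `W` (Hahn–Banach). The compactness
hypothesis forces the unit vectors of `V j` to lie, for large `j`, in any given open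
neighbourhood of `W`, in particular in `{x | ‖x - P x‖ < 1}`. A nonzero `v ∈ V j` with
`P v = 0` would violate this after normalisation, so `P` is injective on `V j`.
-/

section

variable {𝕜 X : Type*} [RCLike 𝕜] [NormedAddCommGroup X] [NormedSpace 𝕜 X]

theorem Submodule.finrank_le_of_norm_sub_lt_one {W V : Submodule 𝕜 X} [FiniteDimensional 𝕜 W]
    (P : X →ₗ[𝕜] W) (h : ∀ v ∈ V, ‖v‖ = 1 → ‖v - P v‖ < 1) :
    Module.finrank 𝕜 V ≤ Module.finrank 𝕜 W := by
  refine LinearMap.finrank_le_finrank_of_injective (f := P ∘ₗ V.subtype) ?_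
  rw [← LinearMap.ker_eq_bot, Submodule.eq_bot_iff]
  intro v hPv
  by_contra hv
  have hv' : (v : X) ≠ 0 := by exact_mod_cast hv
  have hPv' : P v = 0 := hPv
  have := h ((‖(v : X)‖⁻¹ : 𝕜) • (v : X)) (V.smul_mem _ v.2) (norm_smul_inv_norm hv')
  simp [hPv', norm_smul_inv_norm hv'] at this

theorem Submodule.eventually_unit_vectors_mem_of_isOpen {W : Submodule 𝕜 X}
    {V : ℕ → Submodule 𝕜 X}
    (hcompact : ∀ φ : ℕ → ℕ, StrictMono φ →
      ∀ u : ℕ → X, (∀ k, u k ∈ V (φ k) ∧ ‖u k‖ = 1) →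
        ∃ ψ : ℕ → ℕ, StrictMono ψ ∧ ∃ w ∈ W,
          Tendsto (fun k => u (ψ k)) atTop (nhds w))
    {U : Set X} (hU : IsOpen U) (hWU : (W : Set X) ⊆ U) :
    ∀ᶠ j in atTop, ∀ v ∈ V j, ‖v‖ = 1 → v ∈ U := by
  by_contra hfreq
  simp only [not_eventually, not_forall, exists_prop] at hfreq
  obtain ⟨φ, hφ, hbad⟩ := extraction_of_frequently_atTop hfreq
  choose u huV hunit huU using hbad
  obtain ⟨ψ, -, w, hw, hlim⟩ := hcompact φ hφ u fun k => ⟨huV k, hunit k⟩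
  obtain ⟨k, hk⟩ := (hlim.eventually (hU.mem_nhds (hWU hw))).exists
  exact huU (ψ k) hk

end

theorem stmt_12_general {X : Type*} [NormedAddCommGroup X] [NormedSpace ℝ X]
    (W : Submodule ℝ X) (V : ℕ → Submodule ℝ X)
    [FiniteDimensional ℝ W]
    (hcompact : ∀ φ : ℕ → ℕ, StrictMono φ →
      ∀ u : ℕ → X, (∀ k, u k ∈ V (φ k) ∧ ‖u k‖ = 1) →
        ∃ ψ : ℕ → ℕ, StrictMono ψ ∧ ∃ w ∈ W,
          Tendsto (fun k => u (ψ k)) atTop (nhds w)) :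
    ∃ J : ℕ, ∀ j ≥ J, Module.finrank ℝ (V j) ≤ Module.finrank ℝ W := by
  obtain ⟨P, hP⟩ := Submodule.ClosedComplemented.of_finiteDimensional W
  have hU : IsOpen {x : X | ‖x - P x‖ < 1} := isOpen_lt (by fun_prop) continuous_const
  have hWU : (W : Set X) ⊆ {x | ‖x - P x‖ < 1} := fun w hw => by simp [hP ⟨w, hw⟩]
  obtain ⟨J, hJ⟩ := eventually_atTop.1
    (Submodule.eventually_unit_vectors_mem_of_isOpen hcompact hU hWU)
  exact ⟨J, fun j hj => Submodule.finrank_le_of_norm_sub_lt_one P.toLinearMap (hJ j hj)⟩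

/-- If `W` and all `V_j` are finite-dimensional subspaces of a real normed space and
every sequence of unit vectors `u_k ∈ V_{φ(k)}` (for `φ` strictly increasing) has a
subsequence converging to an element of `W`, then eventually `dim V_j ≤ dim W`. -/
theorem stmt_12 {X : Type*} [NormedAddCommGroup X] [NormedSpace ℝ X]
    (W : Submodule ℝ X) (V : ℕ → Submodule ℝ X)
    [FiniteDimensional ℝ W] [∀ j, FiniteDimensional ℝ (V j)]
    (hcompact : ∀ φ : ℕ → ℕ, StrictMono φ →
      ∀ u : ℕ → X, (∀ k, u k ∈ V (φ k) ∧ ‖u k‖ = 1) →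
        ∃ ψ : ℕ → ℕ, StrictMono ψ ∧ ∃ w ∈ W,
          Tendsto (fun k => u (ψ k)) atTop (nhds w)) :
    ∃ J : ℕ, ∀ j ≥ J, Module.finrank ℝ (V j) ≤ Module.finrank ℝ W :=
  stmt_12_general W V hcompact
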